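/- Define d : ℝ⁴ → ℝ by d(y) = sqrt( (y₁−y₃)²/2 + y₂² + y₄² ) and let X = ∇d at points where d ≠ 0. Fix y ∈ ℝ⁴ with d(y) ≠ 0 and let v = (v₁,v₂,v₃,v₄) ∈ ℂ⁴. Set ζ = ( (y₁−y₃)/√2, y₂, y₄ ) ∈ ℝ³ and w = ( (v₁−v₃)/√2, v₂, v₄ ) ∈ ℂ³ (so ‖ζ‖ = d(y)). Then Σ_{j,k=1}^{4} ∂_j X^k(y) · 2·Re( v_j · conj(v_k) ) = (2/d(y)) · ( ‖w‖² − |⟨ζ, w⟩|² / ‖ζ‖² ), where ⟨ζ,w⟩ = Σ_i ζ_i w_i; in particular this quantity is nonnegative. -/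

import Mathlib

/-!
Write `d = ‖P ·‖` with `P : ℝ⁴ → ℝ³` the linear map `z ↦ ((z₀ - z₂)/√2, z₁, z₃)`. Away from the
line, the Hessian of `d` at `y` is the Hessian of the Euclidean norm at `ζ = P y` pulled back
by `P`, namely `(a, b) ↦ (⟪a, b⟫ - ⟪ζ, a⟫⟪ζ, b⟫/‖ζ‖²)/‖ζ‖`. For `v = a + i b` we have
`2 Re(v_j conj v_k) = 2 (a_j a_k + b_j b_k)`, so the contraction is twice the sum of the Hessian
on `a` and on `b`. Since `P` has real coefficients it maps `a, b` to the real and imaginary parts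
of `w`, which gives the closed form; each of the two terms is nonnegative by Cauchy–Schwarz.
-/

open scoped RealInnerProductSpace

section
variable {E F : Type*} [NormedAddCommGroup E] [InnerProductSpace ℝ E]
  [NormedAddCommGroup F] [InnerProductSpace ℝ F]

noncomputable def normHessian (ζ : F) : LinearMap.BilinForm ℝ F :=
  ‖ζ‖⁻¹ • (innerₗ F - (‖ζ‖ ^ 2)⁻¹ • (innerₗ F ζ).smulRight (innerₗ F ζ))

lemma normHessian_apply (ζ a b : F) :
    normHessian ζ a b = ‖ζ‖⁻¹ * (⟪a, b⟫ - (‖ζ‖ ^ 2)⁻¹ * (⟪ζ, a⟫ * ⟪ζ, b⟫)) := by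
  simp [normHessian]

lemma normHessian_self_nonneg (ζ a : F) : 0 ≤ normHessian ζ a a := by
  rw [normHessian_apply]
  rcases eq_or_ne ζ 0 with rfl | hζ
  · simp
  have hCS := real_inner_mul_inner_self_le ζ a
  rw [real_inner_self_eq_norm_sq, real_inner_self_eq_norm_sq] at hCS
  refine mul_nonneg (by positivity) (sub_nonneg.2 ?_)
  rw [real_inner_self_eq_norm_sq, inv_mul_le_iff₀ (by positivity)]
  linarith

variable (P : E →L[ℝ] F)

lemma hasFDerivAt_norm_comp {z : E} (hz : P z ≠ 0) :
    HasFDerivAt (fun x => ‖P x‖) (‖P z‖⁻¹ • (innerSL ℝ (P z)).comp P) z := by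
  have h := (P.hasFDerivAt.norm_sq).sqrt (by positivity)
  simp only [Real.sqrt_sq (norm_nonneg _)] at h
  convert h using 1
  ext u
  simp only [smul_apply, ContinuousLinearMap.comp_apply, coe_innerSL_apply,
    smul_eq_mul, one_div, mul_inv_rev, nsmul_eq_mul, Nat.cast_ofNat]
  ring

lemma fderiv_norm_comp_apply {z : E} (hz : P z ≠ 0) (e : E) :
    fderiv ℝ (fun x => ‖P x‖) z e = ⟪P z, P e⟫ / ‖P z‖ := by
  rw [(hasFDerivAt_norm_comp P hz).fderiv]
  simp [div_eq_inv_mul]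

lemma hasFDerivAt_inner_div_norm_comp {y : E} (hy : P y ≠ 0) (e : E) :
    HasFDerivAt (fun z => ⟪P z, P e⟫ / ‖P z‖)
      (‖P y‖⁻¹ • (innerSL ℝ (P e)).comp P - (⟪P y, P e⟫ / ‖P y‖ ^ 3) • (innerSL ℝ (P y)).comp P)
      y := by
  have hnum : HasFDerivAt (fun z => ⟪P z, P e⟫) ((innerSL ℝ (P e)).comp P) y := by
    convert ((innerSL ℝ (P e)).comp P).hasFDerivAt using 1
    ext z
    simp [real_inner_comm]
  have hinv := (hasDerivAt_inv (norm_ne_zero_iff.2 hy)).comp_hasFDerivAt y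
    (hasFDerivAt_norm_comp P hy)
  have hfun : (fun z => ⟪P z, P e⟫ / ‖P z‖) =
      (fun z => ⟪P z, P e⟫) * ((fun t : ℝ => t⁻¹) ∘ fun z => ‖P z‖) := by
    funext z
    simp [div_eq_mul_inv]
  rw [hfun]
  refine (hnum.mul hinv).congr_fderiv ?_
  ext u
  simp only [neg_smul, smul_neg, Function.comp_apply, add_apply, neg_apply, smul_apply,
    ContinuousLinearMap.comp_apply, coe_innerSL_apply, smul_eq_mul, sub_apply]
  field_simp
  ring

lemma fderiv_fderiv_norm_comp_apply {y : E} (hy : P y ≠ 0) (e u : E) :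
    fderiv ℝ (fun z => fderiv ℝ (fun x => ‖P x‖) z e) y u = normHessian (P y) (P u) (P e) := by
  have hopen : IsOpen {z | P z ≠ 0} := isOpen_ne_fun P.continuous continuous_const
  have heq : (fun z => fderiv ℝ (fun x => ‖P x‖) z e) =ᶠ[nhds y]
      fun z => ⟪P z, P e⟫ / ‖P z‖ := by
    filter_upwards [hopen.mem_nhds hy] with z hz
    exact fderiv_norm_comp_apply P hz e
  rw [heq.fderiv_eq, (hasFDerivAt_inner_div_norm_comp P hy e).fderiv, normHessian_apply]
  simp only [sub_apply, smul_apply, ContinuousLinearMap.comp_apply, coe_innerSL_apply,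
    smul_eq_mul]
  field_simp
  rw [real_inner_comm (P e) (P u)]

end

section
variable {ι : Type*} [Fintype ι]

noncomputable def reVec (v : ι → ℂ) : EuclideanSpace ℝ ι := WithLp.toLp 2 fun i => (v i).re

noncomputable def imVec (v : ι → ℂ) : EuclideanSpace ℝ ι := WithLp.toLp 2 fun i => (v i).im

lemma sum_norm_sq_eq_norm_reVec_sq_add (w : ι → ℂ) :
    ∑ i, ‖w i‖ ^ 2 = ‖reVec w‖ ^ 2 + ‖imVec w‖ ^ 2 := by
  rw [EuclideanSpace.norm_sq_eq, EuclideanSpace.norm_sq_eq, ← Finset.sum_add_distrib]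
  refine Finset.sum_congr rfl fun i _ => ?_
  rw [Complex.sq_norm, Complex.normSq_apply]
  simp [reVec, imVec, sq]

lemma norm_sum_ofReal_mul_sq (ζ : EuclideanSpace ℝ ι) (w : ι → ℂ) :
    ‖∑ i, (ζ i : ℂ) * w i‖ ^ 2 = ⟪ζ, reVec w⟫ ^ 2 + ⟪ζ, imVec w⟫ ^ 2 := by
  rw [Complex.sq_norm, Complex.normSq_apply, Complex.re_sum, Complex.im_sum]
  simp only [mul_comm, Complex.mul_re, Complex.ofReal_re, Complex.ofReal_im, mul_zero, sub_zero,
    Complex.mul_im, zero_add, reVec, imVec, PiLp.inner_apply, RCLike.inner_apply,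
    Real.ringHom_apply]
  ring

lemma normHessian_reVec_add_imVec (ζ : EuclideanSpace ℝ ι) (w : ι → ℂ) :
    normHessian ζ (reVec w) (reVec w) + normHessian ζ (imVec w) (imVec w) =
      ‖ζ‖⁻¹ * (∑ i, ‖w i‖ ^ 2 - ‖∑ i, (ζ i : ℂ) * w i‖ ^ 2 / ‖ζ‖ ^ 2) := by
  rw [normHessian_apply, normHessian_apply, sum_norm_sq_eq_norm_reVec_sq_add,
    norm_sum_ofReal_mul_sq, real_inner_self_eq_norm_sq, real_inner_self_eq_norm_sq]
  ring

variable [DecidableEq ι]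

lemma sum_sum_single_mul (B : LinearMap.BilinForm ℝ (EuclideanSpace ℝ ι))
    (x x' : EuclideanSpace ℝ ι) :
    ∑ j, ∑ k, B (EuclideanSpace.single j 1) (EuclideanSpace.single k 1) * (x j * x' k) =
      B x x' := by
  conv_rhs => rw [← (EuclideanSpace.basisFun ι ℝ).sum_repr x,
    ← (EuclideanSpace.basisFun ι ℝ).sum_repr x']
  simp only [map_sum, map_smul, LinearMap.sum_apply, LinearMap.smul_apply, smul_eq_mul,
    EuclideanSpace.basisFun_apply, EuclideanSpace.basisFun_repr, Finset.mul_sum]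
  rw [Finset.sum_comm]
  refine Finset.sum_congr rfl fun j _ => Finset.sum_congr rfl fun k _ => ?_
  ring

lemma sum_sum_single_mul_two_re_mul_conj (B : LinearMap.BilinForm ℝ (EuclideanSpace ℝ ι))
    (v : ι → ℂ) :
    ∑ j, ∑ k, B (EuclideanSpace.single j 1) (EuclideanSpace.single k 1) *
        (2 * (v j * starRingEnd ℂ (v k)).re) =
      2 * (B (reVec v) (reVec v) + B (imVec v) (imVec v)) := by
  rw [← sum_sum_single_mul B (reVec v), ← sum_sum_single_mul B (imVec v)]
  simp only [reVec, imVec, Complex.mul_re, Complex.conj_re, Complex.conj_im, Finset.mul_sum,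
    ← Finset.sum_add_distrib]
  refine Finset.sum_congr rfl fun j _ => Finset.sum_congr rfl fun k _ => ?_
  ring

end

/-- The coordinates of the component of `z` orthogonal to the line `ℝ (1, 0, 1, 0)`, in the
orthonormal basis `(1, 0, -1, 0)/√2, e₁, e₃` of its complement. -/
noncomputable def normalCoords : EuclideanSpace ℝ (Fin 4) →L[ℝ] EuclideanSpace ℝ (Fin 3) :=
  LinearMap.toContinuousLinearMap
    { toFun := fun z => !₂[(z 0 - z 2) / √2, z 1, z 3]
      map_add' := fun x x' => by
        ext i
        fin_cases i <;> simp [add_sub_add_comm, add_div]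
      map_smul' := fun c x => by
        ext i
        fin_cases i <;> simp [← mul_sub, mul_div_assoc] }

lemma normalCoords_apply (z : EuclideanSpace ℝ (Fin 4)) :
    normalCoords z = !₂[(z 0 - z 2) / √2, z 1, z 3] :=
  rfl

lemma norm_normalCoords (z : EuclideanSpace ℝ (Fin 4)) :
    ‖normalCoords z‖ = √((z 0 - z 2) ^ 2 / 2 + z 1 ^ 2 + z 3 ^ 2) := by
  rw [EuclideanSpace.norm_eq, normalCoords_apply]
  simp [Fin.sum_univ_three, div_pow]

lemma reVec_eq_normalCoords (v : Fin 4 → ℂ) :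
    reVec ![(v 0 - v 2) / (√2 : ℂ), v 1, v 3] = normalCoords (reVec v) := by
  ext i
  fin_cases i <;> simp [reVec, normalCoords_apply]

lemma imVec_eq_normalCoords (v : Fin 4 → ℂ) :
    imVec ![(v 0 - v 2) / (√2 : ℂ), v 1, v 3] = normalCoords (imVec v) := by
  ext i
  fin_cases i <;> simp [imVec, normalCoords_apply]

/-- **Positivity of the contraction `(∂_j X^k) σ_{jk}` for `X = ∇d`,
`d` the distance to the line `{(l,0,l,0)} ⊂ ℝ⁴`.** With
`ζ = ((y₁−y₃)/√2, y₂, y₄)` and `w = ((v₁−v₃)/√2, v₂, v₄)` (so `‖ζ‖ = d(y)`),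
`Σ_{j,k} ∂_j X^k(y) ⬝ 2Re(v_j conj v_k) = (2/d)(‖w‖² − |⟨ζ,w⟩|²/‖ζ‖²) ≥ 0`. -/
theorem hessian_dist_line_contraction_nonneg (d : EuclideanSpace ℝ (Fin 4) → ℝ)
    (hd : ∀ z : EuclideanSpace ℝ (Fin 4),
      d z = Real.sqrt ((z 0 - z 2) ^ 2 / 2 + (z 1) ^ 2 + (z 3) ^ 2))
    (X : Fin 4 → EuclideanSpace ℝ (Fin 4) → ℝ)
    (hX : ∀ (k : Fin 4) (z : EuclideanSpace ℝ (Fin 4)),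
      X k z = fderiv ℝ d z (EuclideanSpace.single k 1))
    (y : EuclideanSpace ℝ (Fin 4)) (hy : d y ≠ 0) (v : Fin 4 → ℂ)
    (ζ : Fin 3 → ℝ) (hζ : ζ = ![(y 0 - y 2) / Real.sqrt 2, y 1, y 3])
    (w : Fin 3 → ℂ) (hw : w = ![(v 0 - v 2) / (Real.sqrt 2 : ℂ), v 1, v 3]) :
    Real.sqrt (∑ i : Fin 3, ζ i ^ 2) = d y ∧
    (∑ j : Fin 4, ∑ k : Fin 4,
        fderiv ℝ (X k) y (EuclideanSpace.single j 1) *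
          (2 * (v j * (starRingEnd ℂ) (v k)).re)) =
      2 / d y *
        ((∑ i : Fin 3, ‖w i‖ ^ 2) -
          ‖∑ i : Fin 3, (ζ i : ℂ) * w i‖ ^ 2 / ∑ i : Fin 3, ζ i ^ 2) ∧
    0 ≤ 2 / d y *
        ((∑ i : Fin 3, ‖w i‖ ^ 2) -
          ‖∑ i : Fin 3, (ζ i : ℂ) * w i‖ ^ 2 / ∑ i : Fin 3, ζ i ^ 2) := by
  have hdP : d = fun z => ‖normalCoords z‖ :=
    funext fun z => (hd z).trans (norm_normalCoords z).symm
  obtain rfl : ζ = (normalCoords y).ofLp := hζ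
  subst hw
  have hPy : normalCoords y ≠ 0 := by simpa [hdP] using hy
  have hsq : ∑ i, normalCoords y i ^ 2 = ‖normalCoords y‖ ^ 2 := by
    simp [EuclideanSpace.norm_sq_eq]
  have hHess : ∀ j k, fderiv ℝ (X k) y (EuclideanSpace.single j 1) =
      (normHessian (normalCoords y)).comp normalCoords.toLinearMap normalCoords.toLinearMap
        (EuclideanSpace.single j 1) (EuclideanSpace.single k 1) := by
    intro j k
    rw [funext (hX k), hdP]
    exact fderiv_fderiv_norm_comp_apply _ hPy _ _
  have hsum := sum_sum_single_mul_two_re_mul_conj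
    ((normHessian (normalCoords y)).comp normalCoords.toLinearMap normalCoords.toLinearMap) v
  simp only [LinearMap.BilinForm.comp_apply, ContinuousLinearMap.coe_coe, ← hHess,
    ← reVec_eq_normalCoords, ← imVec_eq_normalCoords] at hsum
  have hRHS := normHessian_reVec_add_imVec (normalCoords y) ![(v 0 - v 2) / (√2 : ℂ), v 1, v 3]
  rw [hsq, hdP, div_eq_mul_inv 2, mul_assoc, ← hRHS]
  exact ⟨Real.sqrt_sq (norm_nonneg _), hsum,
    mul_nonneg zero_le_two (add_nonneg (normHessian_self_nonneg _ _) (normHessian_self_nonneg _ _))⟩
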